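/- Let w = (w1, w2) ∈ ℕ₊² and let d1, d2 be positive multiples of w2 with d1 < d2 and d1 | d2. Then the polynomial map F = T2 ∘ T1, where T1(x,y) = (x + y^{d1/w2}, y) and T2(x,y) = (x, y + x^{d2/d1}), is a polynomial automorphism of ℂ² with weighted bidegree (deg_w F1, deg_w F2) = (d1, d2), provided d1 ≥ w1. -/

import Mathlib

/-! `F` is the composition of two triangular automorphisms, each inverted by the triangular map
with the negated polynomial. Writing `a = d1 / w2` and `b = d2 / d1`, one has
`F = (x + y ^ a, y + (x + y ^ a) ^ b)`. Weighted degree is subadditive on products, which bounds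
`deg_w F1 ≤ max w1 (a w2) = d1` and `deg_w F2 ≤ max w2 (a b w2) = d2`; the bounds are attained by the
monomials `y ^ a` and `y ^ (a b)`, the latter surviving in `F2` because `x` divides
`(x + y ^ a) ^ b - y ^ (a b)`. -/

open MvPolynomial

/-- A polynomial map of ℂ², given by its two component polynomials. -/
abbrev PolyMap : Type := MvPolynomial (Fin 2) ℂ × MvPolynomial (Fin 2) ℂ

/-- Composition of polynomial maps: (F ∘ G). -/
noncomputable def pcomp (F G : PolyMap) : PolyMap :=
  (MvPolynomial.aeval ![G.1, G.2] F.1, MvPolynomial.aeval ![G.1, G.2] F.2)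

/-- `F` is a polynomial automorphism of ℂ²: it has a polynomial inverse. -/
def IsPolyAut (F : PolyMap) : Prop :=
  ∃ G : PolyMap, pcomp F G = (MvPolynomial.X 0, MvPolynomial.X 1) ∧
    pcomp G F = (MvPolynomial.X 0, MvPolynomial.X 1)

/-- Weighted degree with `wdeg x = w1`, `wdeg y = w2` (0 on the zero polynomial). -/
noncomputable def wdeg (w1 w2 : ℕ) (p : MvPolynomial (Fin 2) ℂ) : ℕ :=
  p.support.sup fun α => α 0 * w1 + α 1 * w2

/-- An affine automorphism: an automorphism both of whose components have total degree 1. -/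
def IsAffineAut (F : PolyMap) : Prop :=
  IsPolyAut F ∧ F.1.totalDegree = 1 ∧ F.2.totalDegree = 1

/-- The triangular map (x, y) ↦ (x, y + f(x)). -/
noncomputable def lowerT (f : Polynomial ℂ) : PolyMap :=
  (MvPolynomial.X 0,
   MvPolynomial.X 1 + Polynomial.aeval (MvPolynomial.X 0 : MvPolynomial (Fin 2) ℂ) f)

/-- The triangular map (x, y) ↦ (x + f(y), y). -/
noncomputable def upperT (f : Polynomial ℂ) : PolyMap :=
  (MvPolynomial.X 0 + Polynomial.aeval (MvPolynomial.X 1 : MvPolynomial (Fin 2) ℂ) f,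
   MvPolynomial.X 1)

/-- `chain L1 f l = T_l ∘ ⋯ ∘ T_1 ∘ L1`, where `T_i = lowerT (f i)` for odd `i`
and `T_i = upperT (f i)` for even `i`. -/
noncomputable def chain (L1 : PolyMap) (f : ℕ → Polynomial ℂ) : ℕ → PolyMap
  | 0 => L1
  | i + 1 => pcomp (if i % 2 = 0 then lowerT (f (i + 1)) else upperT (f (i + 1))) (chain L1 f i)

namespace MvPolynomial

variable {R σ : Type*} [CommSemiring R] (w : σ → ℕ)

theorem weightedTotalDegree_add_le (p q : MvPolynomial σ R) :
    weightedTotalDegree w (p + q) ≤ max (weightedTotalDegree w p) (weightedTotalDegree w q) :=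
  Finset.sup_le fun d hd => by
    classical
    rcases Finset.mem_union.1 (support_add hd) with h | h
    · exact le_max_of_le_left (le_weightedTotalDegree w h)
    · exact le_max_of_le_right (le_weightedTotalDegree w h)

theorem weightedTotalDegree_mul_le (p q : MvPolynomial σ R) :
    weightedTotalDegree w (p * q) ≤ weightedTotalDegree w p + weightedTotalDegree w q :=
  Finset.sup_le fun d hd => by
    classical
    obtain ⟨e, he, f, hf, rfl⟩ := Finset.mem_add.1 (support_mul p q hd)
    rw [map_add]
    exact add_le_add (le_weightedTotalDegree w he) (le_weightedTotalDegree w hf)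

theorem weightedTotalDegree_pow_le (p : MvPolynomial σ R) (n : ℕ) :
    weightedTotalDegree w (p ^ n) ≤ n * weightedTotalDegree w p := by
  induction n with
  | zero => classical simp [weightedTotalDegree, coeff_one]
  | succ n ih =>
    calc weightedTotalDegree w (p ^ (n + 1))
        ≤ weightedTotalDegree w (p ^ n) + weightedTotalDegree w p :=
          pow_succ p n ▸ weightedTotalDegree_mul_le w _ _
      _ ≤ (n + 1) * weightedTotalDegree w p := by rw [add_one_mul]; gcongr

theorem weightedTotalDegree_X_pow [Nontrivial R] (i : σ) (n : ℕ) :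
    weightedTotalDegree w (X i ^ n : MvPolynomial σ R) = n * w i := by
  classical
  rw [X_pow_eq_monomial, weightedTotalDegree, support_monomial, if_neg one_ne_zero,
    Finset.sup_singleton, Finsupp.weight_single, smul_eq_mul]

theorem weightedTotalDegree_X [Nontrivial R] (i : σ) :
    weightedTotalDegree w (X i : MvPolynomial σ R) = w i := by
  simpa using weightedTotalDegree_X_pow (R := R) w i 1

theorem le_weightedTotalDegree_X_pow_add [Nontrivial R] {i : σ} {n : ℕ} {q : MvPolynomial σ R}
    (hq : coeff (Finsupp.single i n) q = 0) :
    n * w i ≤ weightedTotalDegree w (X i ^ n + q) := by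
  have hmem : Finsupp.single i n ∈ (X i ^ n + q).support := by
    classical
    simp [mem_support_iff, coeff_add, hq, coeff_X_pow]
  simpa [Finsupp.weight_single] using le_weightedTotalDegree w hmem

end MvPolynomial

theorem wdeg_eq_weightedTotalDegree (w1 w2 : ℕ) (p : MvPolynomial (Fin 2) ℂ) :
    wdeg w1 w2 p = weightedTotalDegree ![w1, w2] p := by
  refine Finset.sup_congr rfl fun d _ => ?_
  simp [Finsupp.weight_apply, Finsupp.sum_fintype, Fin.sum_univ_two]

theorem aeval_aeval_pcomp (G H : PolyMap) (p : MvPolynomial (Fin 2) ℂ) :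
    aeval ![H.1, H.2] (aeval ![G.1, G.2] p) = aeval ![(pcomp G H).1, (pcomp G H).2] p := by
  rw [← AlgHom.comp_apply, comp_aeval]
  congr 2
  ext i
  fin_cases i <;> rfl

theorem pcomp_assoc (F G H : PolyMap) : pcomp (pcomp F G) H = pcomp F (pcomp G H) := by
  simp only [pcomp, aeval_aeval_pcomp]

theorem pcomp_id_left (F : PolyMap) : pcomp (X 0, X 1) F = F := by
  simp [pcomp]

theorem pcomp_id_right (F : PolyMap) : pcomp F (X 0, X 1) = F := by
  have hid : ![(X 0 : MvPolynomial (Fin 2) ℂ), X 1] = X := by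
    ext i
    fin_cases i <;> rfl
  simp [pcomp, hid]

theorem IsPolyAut.pcomp {F G : PolyMap} (hF : IsPolyAut F) (hG : IsPolyAut G) :
    IsPolyAut (pcomp F G) := by
  obtain ⟨F', hFF', hF'F⟩ := hF
  obtain ⟨G', hGG', hG'G⟩ := hG
  refine ⟨_root_.pcomp G' F', ?_, ?_⟩
  · rw [pcomp_assoc, ← pcomp_assoc G, hGG', pcomp_id_left, hFF']
  · rw [pcomp_assoc, ← pcomp_assoc F', hF'F, pcomp_id_left, hG'G]

theorem lowerT_pcomp_lowerT (f g : Polynomial ℂ) :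
    pcomp (lowerT f) (lowerT g) = lowerT (f + g) := by
  simp only [pcomp, lowerT, map_add, aeval_X, Matrix.cons_val_zero, Matrix.cons_val_one,
    Matrix.cons_val_fin_one, ← Polynomial.aeval_algHom_apply, Prod.mk.injEq, true_and]
  ring

theorem upperT_pcomp_upperT (f g : Polynomial ℂ) :
    pcomp (upperT f) (upperT g) = upperT (f + g) := by
  simp only [pcomp, upperT, map_add, aeval_X, Matrix.cons_val_zero, Matrix.cons_val_one,
    Matrix.cons_val_fin_one, ← Polynomial.aeval_algHom_apply, Prod.mk.injEq, and_true]
  ring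

theorem isPolyAut_lowerT (f : Polynomial ℂ) : IsPolyAut (lowerT f) :=
  ⟨lowerT (-f), by rw [lowerT_pcomp_lowerT, add_neg_cancel]; simp [lowerT],
    by rw [lowerT_pcomp_lowerT, neg_add_cancel]; simp [lowerT]⟩

theorem isPolyAut_upperT (f : Polynomial ℂ) : IsPolyAut (upperT f) :=
  ⟨upperT (-f), by rw [upperT_pcomp_upperT, add_neg_cancel]; simp [upperT],
    by rw [upperT_pcomp_upperT, neg_add_cancel]; simp [upperT]⟩

theorem lowerT_pcomp_upperT_X_pow (a b : ℕ) :
    pcomp (lowerT (Polynomial.X ^ b)) (upperT (Polynomial.X ^ a)) =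
      (X 0 + X 1 ^ a, X 1 + (X 0 + X 1 ^ a) ^ b) := by
  simp [pcomp, lowerT, upperT]

theorem wdeg_X_add_X_pow {w1 w2 a : ℕ} (hw1 : w1 ≤ a * w2) :
    wdeg w1 w2 (X 0 + X 1 ^ a) = a * w2 := by
  rw [wdeg_eq_weightedTotalDegree]
  apply le_antisymm
  · refine (weightedTotalDegree_add_le _ _ _).trans (max_le ?_ ?_)
    · simpa [weightedTotalDegree_X] using hw1
    · simp [weightedTotalDegree_X_pow]
  · rw [add_comm]
    simpa [coeff_X, Finsupp.single_eq_single_iff] using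
      le_weightedTotalDegree_X_pow_add ![w1, w2] (i := 1) (n := a) (q := X 0)

theorem wdeg_X_add_pow_X_add_X_pow {w1 w2 a b : ℕ} (hw1 : w1 ≤ a * w2) (hab : 1 < a * b) :
    wdeg w1 w2 (X 1 + (X 0 + X 1 ^ a) ^ b) = a * b * w2 := by
  rw [wdeg_eq_weightedTotalDegree]
  apply le_antisymm
  · refine (weightedTotalDegree_add_le _ _ _).trans (max_le ?_ ?_)
    · simpa [weightedTotalDegree_X] using Nat.le_mul_of_pos_left w2 (by omega)
    · calc weightedTotalDegree ![w1, w2] ((X 0 + X 1 ^ a) ^ b : MvPolynomial (Fin 2) ℂ)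
          ≤ b * weightedTotalDegree ![w1, w2] (X 0 + X 1 ^ a : MvPolynomial (Fin 2) ℂ) :=
            weightedTotalDegree_pow_le _ _ _
        _ = a * b * w2 := by rw [← wdeg_eq_weightedTotalDegree, wdeg_X_add_X_pow hw1]; ring
  · obtain ⟨r, hr⟩ := sub_dvd_pow_sub_pow (X 0 + X 1 ^ a : MvPolynomial (Fin 2) ℂ) (X 1 ^ a) b
    have hsplit : X 1 + (X 0 + X 1 ^ a) ^ b = X 1 ^ (a * b) + (X 1 + X 0 * r) := by
      rw [add_sub_cancel_right] at hr
      rw [eq_add_of_sub_eq' hr, pow_mul]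
      ring
    have hcoeff : coeff (Finsupp.single 1 (a * b)) (X 1 + X 0 * r) = 0 := by
      rw [coeff_add, coeff_X, if_neg ((Finsupp.single_injective 1).ne hab.ne), coeff_X_mul',
        if_neg (by simp), add_zero]
    rw [hsplit]
    simpa using le_weightedTotalDegree_X_pow_add ![w1, w2] hcoeff

theorem stmt_10_general (w1 w2 : ℕ) (d1 d2 : ℕ)
    (h1 : w2 ∣ d1) (h1' : 0 < d1)
    (hlt : d1 < d2) (hdvd : d1 ∣ d2) (hge : w1 ≤ d1) :
    IsPolyAut (pcomp (lowerT (Polynomial.X ^ (d2 / d1))) (upperT (Polynomial.X ^ (d1 / w2)))) ∧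
    wdeg w1 w2 (pcomp (lowerT (Polynomial.X ^ (d2 / d1)))
      (upperT (Polynomial.X ^ (d1 / w2)))).1 = d1 ∧
    wdeg w1 w2 (pcomp (lowerT (Polynomial.X ^ (d2 / d1)))
      (upperT (Polynomial.X ^ (d1 / w2)))).2 = d2 := by
  refine ⟨(isPolyAut_lowerT _).pcomp (isPolyAut_upperT _), ?_⟩
  set a := d1 / w2
  set b := d2 / d1
  have ha : a * w2 = d1 := Nat.div_mul_cancel h1
  have hb : b * d1 = d2 := Nat.div_mul_cancel hdvd
  have hab : 1 < a * b := by
    have ha0 : 0 < a := Nat.pos_of_ne_zero (by rintro h; simp [h] at ha; omega)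
    have hb1 : 1 < b := by
      by_contra! hb1
      interval_cases b <;> omega
    nlinarith
  rw [lowerT_pcomp_upperT_X_pow, wdeg_X_add_X_pow (ha ▸ hge),
    wdeg_X_add_pow_X_add_X_pow (ha ▸ hge) hab]
  exact ⟨ha, by rw [← hb, ← ha]; ring⟩

/-- For `d1, d2` positive multiples of `w2` with `w1 ≤ d1`, `d1 < d2` and `d1 ∣ d2`, the map
`F = T2 ∘ T1` with `T1(x,y) = (x + y^{d1/w2}, y)`, `T2(x,y) = (x, y + x^{d2/d1})` is an
automorphism of weighted bidegree `(d1, d2)`. -/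
theorem stmt_10 (w1 w2 : ℕ) (hw1 : 0 < w1) (hw2 : 0 < w2) (d1 d2 : ℕ)
    (h1 : w2 ∣ d1) (h1' : 0 < d1) (h2 : w2 ∣ d2) (h2' : 0 < d2)
    (hlt : d1 < d2) (hdvd : d1 ∣ d2) (hge : w1 ≤ d1) :
    IsPolyAut (pcomp (lowerT (Polynomial.X ^ (d2 / d1))) (upperT (Polynomial.X ^ (d1 / w2)))) ∧
    wdeg w1 w2 (pcomp (lowerT (Polynomial.X ^ (d2 / d1)))
      (upperT (Polynomial.X ^ (d1 / w2)))).1 = d1 ∧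
    wdeg w1 w2 (pcomp (lowerT (Polynomial.X ^ (d2 / d1)))
      (upperT (Polynomial.X ^ (d1 / w2)))).2 = d2 :=
  stmt_10_general w1 w2 d1 d2 h1 h1' hlt hdvd hge
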